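/- Any two consistent extensions to J(Q,S) of a consistent map c on J(F,T), where T = M_F(S), are equal: if d_1, d_2 : J(Q,S) → R are consistent and both restrict to c on J(F,T), then d_1 = d_2. -/

import Mathlib

/-- An abstract model of the collection of all number fields inside a fixed algebraic
closure `Q̄` of `ℚ`, ordered by inclusion `le`, together with, for each number field
`K`, its set `Pl K` of places and the restriction maps `res K L : Pl L → Pl K` sending a
place of `L ⊇ K` to the place of `K` below it (with finite fibers). -/
structure NumberFields where
  NF : Type
  le : NF → NF → Prop
  le_refl : ∀ K, le K K
  le_trans : ∀ {K L M}, le K L → le L M → le K M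
  Q : NF
  Q_le : ∀ K, le Q K
  directed : ∀ K L, ∃ M, le K M ∧ le L M
  Pl : NF → Type
  res : ∀ (K L : NF), Pl L → Pl K
  res_refl : ∀ K (v : Pl K), res K K v = v
  res_trans : ∀ {K L M}, le K L → le L M → ∀ x : Pl M, res K L (res L M x) = res K M x
  fiber_finite : ∀ {K L}, le K L → ∀ v : Pl K, {w : Pl L | res K L w = v}.Finite
  fiber_nonempty : ∀ {K L}, le K L → ∀ v : Pl K, ∃ w : Pl L, res K L w = v

namespace NumberFields

variable (P : NumberFields)

/-- `M_K(S)`: for a set `S` of places of `F` and a finite extension `K/F`, the set of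
places of `K` dividing a place in `S`. -/
def MK (F : P.NF) (S : Set (P.Pl F)) (K : P.NF) : Set (P.Pl K) := {v | P.res F K v ∈ S}

/-- `(K,v) ∈ J(F,S)`: `K` is a finite extension of `F` and `v ∈ M_K(S)`. -/
def MemJ (F : P.NF) (S : Set (P.Pl F)) (K : P.NF) (v : P.Pl K) : Prop :=
  P.le F K ∧ P.res F K v ∈ S

/-- The index set `J(F,S) = {(K,v) : K a finite extension of F, v ∈ M_K(S)}`. -/
def JT (F : P.NF) (S : Set (P.Pl F)) : Type :=
  {p : Σ K : P.NF, P.Pl K // P.MemJ F S p.1 p.2}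

theorem liftJ {F : P.NF} {S : Set (P.Pl F)} {K L : P.NF} {v : P.Pl K}
    (m : P.MemJ F S K v) (h : P.le K L) {w : P.Pl L} (hw : P.res K L w = v) :
    P.MemJ F S L w := by
  refine ⟨P.le_trans m.1 h, ?_⟩
  rw [← P.res_trans m.1 h, hw]
  exact m.2

/-- A map `c : J(F,S) → ℝ` is consistent if `c(K,v) = Σ_{w∣v} c(L,w)` for all
`(K,v) ∈ J(F,S)` and all finite extensions `L/K`. -/
def ConsistentJ (F : P.NF) (S : Set (P.Pl F)) (c : P.JT F S → ℝ) : Prop :=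
  ∀ (K : P.NF) (v : P.Pl K) (m : P.MemJ F S K v) (L : P.NF) (h : P.le K L),
    c ⟨⟨K, v⟩, m⟩ = ∑ᶠ w : {w : P.Pl L // P.res K L w = v}, c ⟨⟨L, w.1⟩, P.liftJ m h w.2⟩

/-- The space `J^*(F,S)` of consistent maps on `J(F,S)`. -/
def ConsistentJSub (F : P.NF) (S : Set (P.Pl F)) : Submodule ℝ (P.JT F S → ℝ) where
  carrier := {c | P.ConsistentJ F S c}
  add_mem' := by
    intro c d hc hd K v m L h
    haveI : Finite {w : P.Pl L // P.res K L w = v} := (P.fiber_finite h v).to_subtype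
    show c ⟨⟨K, v⟩, m⟩ + d ⟨⟨K, v⟩, m⟩ = _
    rw [hc K v m L h, hd K v m L h,
      ← finsum_add_distrib (Set.finite_univ.subset (Set.subset_univ _))
        (Set.finite_univ.subset (Set.subset_univ _))]
    rfl
  zero_mem' := by intro K v m L h; exact finsum_zero.symm
  smul_mem' := by
    intro r c hc K v m L h
    haveI : Finite {w : P.Pl L // P.res K L w = v} := (P.fiber_finite h v).to_subtype
    show r * c ⟨⟨K, v⟩, m⟩ = _
    rw [hc K v m L h, mul_finsum]
    rfl

theorem memJ_MK_of_le {F₀ F K : P.NF} {S : Set (P.Pl F₀)} {v : P.Pl K} (hF₀F : P.le F₀ F)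
    (m : P.MemJ F₀ S K v) (hFK : P.le F K) : P.MemJ F (P.MK F₀ S F) K v :=
  ⟨hFK, show P.res F₀ F (P.res F K v) ∈ S by rw [P.res_trans hF₀F hFK]; exact m.2⟩

theorem ConsistentJ.eq_of_eqOn_le {F : P.NF} {S : Set (P.Pl F)} {c d : P.JT F S → ℝ}
    (hc : P.ConsistentJ F S c) (hd : P.ConsistentJ F S d) (E : P.NF)
    (hcd : ∀ p : P.JT F S, P.le E p.1.1 → c p = d p) : c = d := by
  funext ⟨⟨K, v⟩, m⟩
  -- in a common extension `L` of `K` and `E`, consistency expands both values over places above `E`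
  obtain ⟨L, hKL, hEL⟩ := P.directed K E
  rw [hc K v m L hKL, hd K v m L hKL]
  exact finsum_congr fun w => hcd _ hEL

/-- two consistent maps `d₁, d₂ : J(ℚ,S) → ℝ` that agree on
`J(F,T) ⊆ J(ℚ,S)`, where `T = M_F(S)`, are equal. -/
theorem stmt15 (S : Set (P.Pl P.Q)) (F : P.NF) (d1 d2 : P.JT P.Q S → ℝ)
    (h1 : P.ConsistentJ P.Q S d1) (h2 : P.ConsistentJ P.Q S d2)
    (hagree : ∀ (K : P.NF) (v : P.Pl K) (m : P.MemJ P.Q S K v),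
      P.MemJ F (P.MK P.Q S F) K v → d1 ⟨⟨K, v⟩, m⟩ = d2 ⟨⟨K, v⟩, m⟩) :
    d1 = d2 :=
  ConsistentJ.eq_of_eqOn_le P h1 h2 F fun ⟨⟨K, v⟩, m⟩ hFK =>
    hagree K v m (P.memJ_MK_of_le (P.Q_le F) m hFK)

end NumberFields
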